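/- arXiv:1802.03093 — 3 statements merged into one kernel-verified Lean document; each statement's English description precedes it below -/
import Mathlib

section
/- Let n ≥ 3, R, η, C₄, C > 0, and let U : (0,R) → ℝ be a nonnegative, nonincreasing function such that ∫₀^r s^{n-1} U(s) ds ≥ C₄ r^{n-2} for all 0 < r < η and ∫₀^r s^{n-1} U(s) ds ≤ (C/n) r^{n-2} for all 0 < r < R. Then there exist c > 0 and η' > 0 such that U(r) ≥ c r^{-2} for all 0 < r < η'. -/
open Set intervalIntegral

set_option maxHeartbeats 1600000 in
theorem stmt0 (n : ℕ) (hn : 3 ≤ n) (R η C₄ C : ℝ) (hR : 0 < R) (hη : 0 < η)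
    (hC₄ : 0 < C₄) (hC : 0 < C) (U : ℝ → ℝ)
    (hU0 : ∀ r ∈ Ioo (0:ℝ) R, 0 ≤ U r)
    (hmono : ∀ r s, r ∈ Ioo (0:ℝ) R → s ∈ Ioo (0:ℝ) R → r ≤ s → U s ≤ U r)
    (hlow : ∀ r, 0 < r → r < η → C₄ * r ^ (n - 2) ≤ ∫ s in (0:ℝ)..r, s ^ (n - 1) * U s)
    (hup : ∀ r, 0 < r → r < R → (∫ s in (0:ℝ)..r, s ^ (n - 1) * U s) ≤ (C / n) * r ^ (n - 2)) :
    ∃ c > 0, ∃ η' > 0, ∀ r, 0 < r → r < η' → c / r ^ 2 ≤ U r := by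
  have hn3 : (3:ℝ) ≤ (n:ℝ) := by exact_mod_cast hn
  have hnpos : (0:ℝ) < n := by linarith
  set K : ℝ := max 1 (C / (n * C₄)) + 1 with hK
  have hK1 : (1:ℝ) < K := by
    have := le_max_left 1 (C / (n * C₄)); simp only [hK]; linarith
  have hK0 : (0:ℝ) < K := by linarith
  have hKC : C / (n * C₄) < K := by
    have := le_max_right 1 (C / (n * C₄)); simp only [hK]; linarith
  have hKpow : K ≤ K ^ (n - 2) := by
    apply le_self_pow₀ (le_of_lt hK1)
    omega
  have hcnum : C < n * C₄ * K ^ (n - 2) := by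
    have h1 : C < n * C₄ * K := by
      rw [div_lt_iff₀ (by positivity)] at hKC; nlinarith
    nlinarith [mul_pos hnpos hC₄]
  set c : ℝ := (n * C₄ * K ^ (n - 2) - C) / K ^ n with hc
  have hcpos : 0 < c := by
    apply div_pos (by linarith) (by positivity)
  clear_value K c
  refine ⟨c, hcpos, min η R / K, by positivity, fun r hr hrη' => ?_⟩
  have hKr_lt : K * r < min η R := by
    rw [lt_div_iff₀ hK0] at hrη'
    linarith [hrη']
  have hKrη : K * r < η := lt_of_lt_of_le hKr_lt (min_le_left _ _)
  have hKrR : K * r < R := lt_of_lt_of_le hKr_lt (min_le_right _ _)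
  have hrKr : r < K * r := by nlinarith
  have hrR : r < R := by linarith
  have hKrpos : 0 < K * r := by positivity
  -- integrability
  have hint : IntervalIntegrable (fun s => s ^ (n - 1) * U s) MeasureTheory.volume 0 (K * r) := by
    by_contra h
    have h0 : (∫ s in (0:ℝ)..(K*r), s ^ (n - 1) * U s) = 0 := integral_undef h
    have := hlow (K * r) hKrpos hKrη
    rw [h0] at this
    nlinarith [pow_pos hKrpos (n - 2)]
  have hint1 : IntervalIntegrable (fun s => s ^ (n - 1) * U s) MeasureTheory.volume 0 r := by
    apply hint.mono_set
    rw [uIcc_of_le (le_of_lt hr), uIcc_of_le (le_of_lt hKrpos)]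
    exact Icc_subset_Icc le_rfl (le_of_lt hrKr)
  have hint2 : IntervalIntegrable (fun s => s ^ (n - 1) * U s) MeasureTheory.volume r (K * r) := by
    apply hint.mono_set
    rw [uIcc_of_le (le_of_lt hrKr), uIcc_of_le (le_of_lt hKrpos)]
    exact Icc_subset_Icc (le_of_lt hr) le_rfl
  have hsplit : (∫ s in (0:ℝ)..r, s ^ (n - 1) * U s) + (∫ s in r..(K*r), s ^ (n - 1) * U s)
      = ∫ s in (0:ℝ)..(K*r), s ^ (n - 1) * U s :=
    integral_add_adjacent_intervals hint1 hint2
  -- bound middle integral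
  have hUrmem : r ∈ Ioo (0:ℝ) R := ⟨hr, hrR⟩
  have hUr0 : 0 ≤ U r := hU0 r hUrmem
  have hmid : (∫ s in r..(K*r), s ^ (n - 1) * U s) ≤ ∫ s in r..(K*r), s ^ (n - 1) * U r := by
    apply integral_mono_on (le_of_lt hrKr) hint2
    · exact (intervalIntegrable_pow _).mul_const _
    · intro s hs
      have hs0 : 0 < s := lt_of_lt_of_le hr hs.1
      have hsR : s < R := lt_of_le_of_lt hs.2 hKrR
      have := hmono r s hUrmem ⟨hs0, hsR⟩ hs.1
      have hsp : (0:ℝ) ≤ s ^ (n - 1) := by positivity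
      nlinarith
  have hmidval : (∫ s in r..(K*r), s ^ (n - 1) * U r)
      = ((K*r) ^ n - r ^ n) / n * U r := by
    rw [integral_mul_const, integral_pow]
    have e1 : n - 1 + 1 = n := by omega
    have e2 : ((n - 1 : ℕ) : ℝ) + 1 = n := by
      rw [Nat.cast_sub (by omega : 1 ≤ n)]; push_cast; ring
    rw [e1, e2]
  -- chain
  have h1 := hlow (K * r) hKrpos hKrη
  have h2 := hup r hr hrR
  have hKrn2 : (K * r) ^ (n - 2) = K ^ (n - 2) * r ^ (n - 2) := mul_pow _ _ _
  have hKrn : (K * r) ^ n = K ^ n * r ^ n := mul_pow _ _ _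
  have key : C₄ * (K ^ (n-2) * r ^ (n-2)) ≤ C / n * r ^ (n-2) + (K^n * r^n - r^n)/n * U r := by
    rw [← hKrn2, ← hKrn]
    calc C₄ * (K * r) ^ (n - 2) ≤ ∫ s in (0:ℝ)..(K*r), s ^ (n - 1) * U s := h1
      _ = (∫ s in (0:ℝ)..r, s ^ (n - 1) * U s) + (∫ s in r..(K*r), s ^ (n - 1) * U s) :=
        hsplit.symm
      _ ≤ C / n * r ^ (n-2) + ((K*r) ^ n - r ^ n) / n * U r := by
        refine add_le_add h2 (hmid.trans_eq hmidval)
  -- finish algebra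
  have hrn : r ^ n = r ^ (n - 2) * r ^ 2 := by
    rw [← pow_add]; congr 1; omega
  rw [div_le_iff₀ (by positivity : (0:ℝ) < r ^ 2), hc, div_le_iff₀ (by positivity : (0:ℝ) < K ^ n)]
  have hrn2pos : (0:ℝ) < r ^ (n - 2) := by positivity
  have key2 : n * C₄ * (K ^ (n-2) * r ^ (n-2)) ≤ C * r ^ (n-2) + (K^n * r^n - r^n) * U r := by
    have h := mul_le_mul_of_nonneg_left key hnpos.le
    have hne : (n:ℝ) ≠ 0 := ne_of_gt hnpos
    have heq : (n:ℝ) * (C / ↑n * r ^ (n-2) + (K^n * r^n - r^n)/↑n * U r)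
        = C * r ^ (n-2) + (K^n * r^n - r^n) * U r := by
      field_simp
    rw [heq] at h
    linarith [h]
  -- divide by r^(n-2)
  have key3 : (n * C₄ * K ^ (n-2) - C) * r ^ (n-2) ≤ K^n * r^2 * U r * r ^ (n-2) := by
    have h4 : (K^n * r^n - r^n) * U r ≤ K^n * r^n * U r := by
      linarith [mul_nonneg (pow_pos hr n).le hUr0]
    rw [hrn] at key2 h4
    linarith
  have := le_of_mul_le_mul_right (by linarith [key3]) hrn2pos
  nlinarith [this]
end

section
/- Let w : (0,R) × (0,T) → ℝ be C² in r and C¹ in t, satisfying w_t ≥ 0, w_r ≤ 0, w ≥ μ̃ ≥ 0, and the PDE w_t = w_{rr} + ((n+1)/r) w_r + n(w + b r w_r)(w − μ̃) with b > 0, n ≥ 1, μ ≥ 0, μ̃ = μ/n. Then the quantity E(r,t) = (1/2) w_r² + (n/3) w³ is nonincreasing in r for each fixed t, and consequently |w_r(r,t)| ≤ C₁ w^{3/2}(0,t) with C₁ = √(2n/3), assuming w(·,t) extends continuously to r = 0 with w_r(0,t)=0. -/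
/-!
Along a time slice, the PDE gives `w_rr + n w² = w_t - ((n+1)/r) w_r - n b r w_r (w - μ̃) + μ w`,
and each term on the right is nonnegative under the sign assumptions. Hence
`∂_r E = w_r (w_rr + n w²) ≤ 0`, so `E` decreases from its boundary value `E(0,t) = (n/3) w(0,t)³`,
and `w_r² / 2 ≤ E(r,t) ≤ (n/3) w(0,t)³` is the gradient bound.
-/

open Set Filter Topology

noncomputable def energy (c p q : ℝ) : ℝ := (1 / 2) * q ^ 2 + (c / 3) * p ^ 3

theorem Filter.Tendsto.energy {α : Type*} {l : Filter α} {f g : α → ℝ} {p q : ℝ} (c : ℝ)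
    (hf : Tendsto f l (𝓝 p)) (hg : Tendsto g l (𝓝 q)) :
    Tendsto (fun x => energy c (f x) (g x)) l (𝓝 (energy c p q)) :=
  ((hg.pow 2).const_mul _).add ((hf.pow 3).const_mul _)

theorem hasDerivAt_energy {c x : ℝ} {f f' f'' : ℝ → ℝ}
    (hf : HasDerivAt f (f' x) x) (hf' : HasDerivAt f' (f'' x) x) :
    HasDerivAt (fun y => energy c (f y) (f' y)) (f' x * (f'' x + c * f x ^ 2)) x := by
  refine (((hf'.fun_pow 2).const_mul (1 / 2)).add ((hf.fun_pow 3).const_mul (c / 3))).congr_deriv ?_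
  push_cast
  ring

theorem antitoneOn_energy {c : ℝ} {s : Set ℝ} {f f' f'' : ℝ → ℝ} (hs : Convex ℝ s)
    (hf : ∀ x ∈ s, HasDerivAt f (f' x) x) (hf' : ∀ x ∈ s, HasDerivAt f' (f'' x) x)
    (hslope : ∀ x ∈ s, f' x ≤ 0) (hcurv : ∀ x ∈ s, 0 ≤ f'' x + c * f x ^ 2) :
    AntitoneOn (fun x => energy c (f x) (f' x)) s := by
  have hE : ∀ x ∈ s,
      HasDerivAt (fun y => energy c (f y) (f' y)) (f' x * (f'' x + c * f x ^ 2)) x :=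
    fun x hx => hasDerivAt_energy (hf x hx) (hf' x hx)
  refine antitoneOn_of_hasDerivWithinAt_nonpos hs
    (fun x hx => (hE x hx).continuousAt.continuousWithinAt)
    (fun x hx => (hE x (interior_subset hx)).hasDerivWithinAt)
    (fun x hx => ?_)
  have hx := interior_subset hx
  exact mul_nonpos_of_nonpos_of_nonneg (hslope x hx) (hcurv x hx)

theorem AntitoneOn.le_of_tendsto_nhdsGT {α β : Type*} [LinearOrder α] [TopologicalSpace α]
    [OrderTopology α] [DenselyOrdered α] [NoMaxOrder α] [Preorder β] [TopologicalSpace β]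
    [ClosedIciTopology β] {f : α → β} {a b x : α} {L : β} (hf : AntitoneOn f (Ioo a b))
    (hlim : Tendsto f (𝓝[>] a) (𝓝 L)) (hx : x ∈ Ioo a b) : f x ≤ L := by
  refine ge_of_tendsto hlim ?_
  filter_upwards [Ioo_mem_nhdsGT hx.1] with y hy
  exact hf ⟨hy.1, hy.2.trans hx.2⟩ hx hy.2.le

theorem abs_le_of_energy_le {c p p₀ q : ℝ} (hc : 0 ≤ c) (hp : 0 ≤ p) (hp₀ : 0 ≤ p₀)
    (h : energy c p q ≤ energy c p₀ 0) :
    |q| ≤ Real.sqrt (2 * c / 3) * p₀ ^ ((3 : ℝ) / 2) := by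
  have hsq : q ^ 2 ≤ 2 * c / 3 * p₀ ^ 3 := by
    have : 0 ≤ c / 3 * p ^ 3 := by positivity
    unfold energy at h
    linarith
  have hrpow : p₀ ^ ((3 : ℝ) / 2) = Real.sqrt (p₀ ^ 3) := by
    rw [Real.sqrt_eq_rpow, ← Real.rpow_natCast, ← Real.rpow_mul hp₀]
    norm_num
  rw [← Real.sqrt_sq_eq_abs, hrpow, ← Real.sqrt_mul (by positivity)]
  exact Real.sqrt_le_sqrt hsq

theorem wrr_add_mul_sq_nonneg {n b m r w wr wrr wt : ℝ} (hn : 0 ≤ n) (hb : 0 ≤ b) (hr : 0 ≤ r)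
    (hm : 0 ≤ m) (hpde : wt = wrr + ((n + 1) / r) * wr + n * (w + b * r * wr) * (w - m))
    (hwt : 0 ≤ wt) (hwr : wr ≤ 0) (hw : m ≤ w) :
    0 ≤ wrr + n * w ^ 2 := by
  have hdiffusion : ((n + 1) / r) * wr ≤ 0 :=
    mul_nonpos_of_nonneg_of_nonpos (by positivity) hwr
  have hdrift : n * (b * r * wr) * (w - m) ≤ 0 :=
    mul_nonpos_of_nonpos_of_nonneg
      (mul_nonpos_of_nonneg_of_nonpos hn (mul_nonpos_of_nonneg_of_nonpos (by positivity) hwr))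
      (sub_nonneg.2 hw)
  have hreaction : 0 ≤ n * w * m := mul_nonneg (mul_nonneg hn (hm.trans hw)) hm
  have hsplit :
      wrr + n * w ^ 2 = wt - ((n + 1) / r) * wr - n * (b * r * wr) * (w - m) + n * w * m := by
    rw [hpde]; ring
  linarith

theorem stmt13_general (n : ℕ) (R T b mu : ℝ)
    (hb : 0 < b) (hmu : 0 ≤ mu)
    (w wr wrr wt : ℝ → ℝ → ℝ)
    (hwr : ∀ r ∈ Ioo (0:ℝ) R, ∀ t ∈ Ioo (0:ℝ) T, HasDerivAt (fun ρ => w ρ t) (wr r t) r)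
    (hwrr : ∀ r ∈ Ioo (0:ℝ) R, ∀ t ∈ Ioo (0:ℝ) T, HasDerivAt (fun ρ => wr ρ t) (wrr r t) r)
    (hpde : ∀ r ∈ Ioo (0:ℝ) R, ∀ t ∈ Ioo (0:ℝ) T,
      wt r t = wrr r t + (((n : ℝ) + 1) / r) * wr r t
        + n * (w r t + b * r * wr r t) * (w r t - mu / n))
    (hwt0 : ∀ r ∈ Ioo (0:ℝ) R, ∀ t ∈ Ioo (0:ℝ) T, 0 ≤ wt r t)
    (hwr0 : ∀ r ∈ Ioo (0:ℝ) R, ∀ t ∈ Ioo (0:ℝ) T, wr r t ≤ 0)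
    (hwlow : ∀ r ∈ Ioo (0:ℝ) R, ∀ t ∈ Ioo (0:ℝ) T, mu / n ≤ w r t)
    (hwcont : ∀ t ∈ Ioo (0:ℝ) T,
      Filter.Tendsto (fun ρ => w ρ t) (nhdsWithin 0 (Ioi 0)) (nhds (w 0 t)))
    (hwrcont : ∀ t ∈ Ioo (0:ℝ) T,
      Filter.Tendsto (fun ρ => wr ρ t) (nhdsWithin 0 (Ioi 0)) (nhds (wr 0 t)))
    (hwr00 : ∀ t ∈ Ioo (0:ℝ) T, wr 0 t = 0) :
    (∀ t ∈ Ioo (0:ℝ) T, ∀ r₁ ∈ Ioo (0:ℝ) R, ∀ r₂ ∈ Ioo (0:ℝ) R, r₁ ≤ r₂ →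
        (1 / 2) * (wr r₂ t) ^ 2 + ((n : ℝ) / 3) * (w r₂ t) ^ 3
          ≤ (1 / 2) * (wr r₁ t) ^ 2 + ((n : ℝ) / 3) * (w r₁ t) ^ 3) ∧
    (∀ t ∈ Ioo (0:ℝ) T, ∀ r ∈ Ioo (0:ℝ) R,
        |wr r t| ≤ Real.sqrt (2 * n / 3) * (w 0 t) ^ ((3:ℝ) / 2)) := by
  have hm : 0 ≤ mu / n := div_nonneg hmu n.cast_nonneg
  have hanti : ∀ t ∈ Ioo (0:ℝ) T, AntitoneOn (fun ρ => energy n (w ρ t) (wr ρ t)) (Ioo 0 R) :=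
    fun t ht => antitoneOn_energy (convex_Ioo 0 R) (fun r hr => hwr r hr t ht)
      (fun r hr => hwrr r hr t ht) (fun r hr => hwr0 r hr t ht)
      fun r hr => wrr_add_mul_sq_nonneg n.cast_nonneg hb.le hr.1.le hm (hpde r hr t ht)
        (hwt0 r hr t ht) (hwr0 r hr t ht) (hwlow r hr t ht)
  refine ⟨fun t ht r₁ hr₁ r₂ hr₂ h12 => hanti t ht hr₁ hr₂ h12, fun t ht r hr => ?_⟩
  have hw₀ : mu / n ≤ w 0 t := by
    refine ge_of_tendsto (hwcont t ht) ?_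
    filter_upwards [Ioo_mem_nhdsGT (hr.1.trans hr.2)] with ρ hρ using hwlow ρ hρ t ht
  have hlim : Tendsto (fun ρ => energy n (w ρ t) (wr ρ t)) (𝓝[>] 0) (𝓝 (energy n (w 0 t) 0)) :=
    by simpa only [hwr00 t ht] using (hwcont t ht).energy n (hwrcont t ht)
  exact abs_le_of_energy_le n.cast_nonneg (hm.trans (hwlow r hr t ht)) (hm.trans hw₀)
    ((hanti t ht).le_of_tendsto_nhdsGT hlim hr)

theorem stmt13 (n : ℕ) (hn : 1 ≤ n) (R T b mu : ℝ) (hR : 0 < R) (hT : 0 < T)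
    (hb : 0 < b) (hmu : 0 ≤ mu)
    (w wr wrr wt : ℝ → ℝ → ℝ)
    (hwr : ∀ r ∈ Ioo (0:ℝ) R, ∀ t ∈ Ioo (0:ℝ) T, HasDerivAt (fun ρ => w ρ t) (wr r t) r)
    (hwrr : ∀ r ∈ Ioo (0:ℝ) R, ∀ t ∈ Ioo (0:ℝ) T, HasDerivAt (fun ρ => wr ρ t) (wrr r t) r)
    (hwt : ∀ r ∈ Ioo (0:ℝ) R, ∀ t ∈ Ioo (0:ℝ) T, HasDerivAt (fun τ => w r τ) (wt r t) t)
    (hpde : ∀ r ∈ Ioo (0:ℝ) R, ∀ t ∈ Ioo (0:ℝ) T,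
      wt r t = wrr r t + (((n : ℝ) + 1) / r) * wr r t
        + n * (w r t + b * r * wr r t) * (w r t - mu / n))
    (hwt0 : ∀ r ∈ Ioo (0:ℝ) R, ∀ t ∈ Ioo (0:ℝ) T, 0 ≤ wt r t)
    (hwr0 : ∀ r ∈ Ioo (0:ℝ) R, ∀ t ∈ Ioo (0:ℝ) T, wr r t ≤ 0)
    (hwlow : ∀ r ∈ Ioo (0:ℝ) R, ∀ t ∈ Ioo (0:ℝ) T, mu / n ≤ w r t)
    (hwcont : ∀ t ∈ Ioo (0:ℝ) T,
      Filter.Tendsto (fun ρ => w ρ t) (nhdsWithin 0 (Ioi 0)) (nhds (w 0 t)))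
    (hwrcont : ∀ t ∈ Ioo (0:ℝ) T,
      Filter.Tendsto (fun ρ => wr ρ t) (nhdsWithin 0 (Ioi 0)) (nhds (wr 0 t)))
    (hwr00 : ∀ t ∈ Ioo (0:ℝ) T, wr 0 t = 0) :
    (∀ t ∈ Ioo (0:ℝ) T, ∀ r₁ ∈ Ioo (0:ℝ) R, ∀ r₂ ∈ Ioo (0:ℝ) R, r₁ ≤ r₂ →
        (1 / 2) * (wr r₂ t) ^ 2 + ((n : ℝ) / 3) * (w r₂ t) ^ 3
          ≤ (1 / 2) * (wr r₁ t) ^ 2 + ((n : ℝ) / 3) * (w r₁ t) ^ 3) ∧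
    (∀ t ∈ Ioo (0:ℝ) T, ∀ r ∈ Ioo (0:ℝ) R,
        |wr r t| ≤ Real.sqrt (2 * n / 3) * (w 0 t) ^ ((3:ℝ) / 2)) :=
  stmt13_general n R T b mu hb hmu w wr wrr wt hwr hwrr hpde hwt0 hwr0 hwlow hwcont hwrcont hwr00
end

section
/- Let g : [0,r₀] → ℝ be positive, differentiable, with g'(r) ≥ −C g^{3/2}(r) on [0,r₀] and g(r₀) = g(0)/2. Then g(r₀) ≥ c r₀^{-2}, where c = (2(√2 − 1)/C)² / 4, i.e., there exists an explicit constant c > 0 depending only on C such that g(r₀) ≥ c r₀^{-2}. -/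
/-! The function `r ↦ C/2 * r - g r ^ (-1/2)` has nonnegative derivative, so `g ^ (-1/2)` grows
at most linearly with slope `C/2`. Since `g 0 ^ (-1/2) = g r₀ ^ (-1/2) / √2`, this gives
`(1 - 1/√2) g r₀ ^ (-1/2) ≤ C r₀ / 2`, and squaring yields the lower bound on `g r₀`. -/

open Real Set

lemma deriv_rpow_neg_half_le {y d C : ℝ} (hy : 0 < y) (h : -(C * y ^ (3 / 2 : ℝ)) ≤ d) :
    d * (-1 / 2) * y ^ (-1 / 2 - 1 : ℝ) ≤ C / 2 := by
  have hmul : y ^ (3 / 2 : ℝ) * y ^ (-1 / 2 - 1 : ℝ) = 1 := by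
    rw [← rpow_add hy]; norm_num
  have := mul_le_mul_of_nonneg_right h (rpow_pos_of_pos hy (-1 / 2 - 1)).le
  rw [neg_mul, mul_assoc, hmul, mul_one] at this
  linarith

lemma rpow_neg_half_sub_le_of_neg_mul_rpow_le_deriv {g g' : ℝ → ℝ} {a b C : ℝ} (hab : a ≤ b)
    (hpos : ∀ r ∈ Icc a b, 0 < g r) (hderiv : ∀ r ∈ Icc a b, HasDerivAt g (g' r) r)
    (hineq : ∀ r ∈ Icc a b, -(C * g r ^ (3 / 2 : ℝ)) ≤ g' r) :
    g b ^ (-1 / 2 : ℝ) - g a ^ (-1 / 2 : ℝ) ≤ C / 2 * (b - a) := by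
  have hD : ∀ r ∈ Icc a b, HasDerivAt (fun r ↦ g r ^ (-1 / 2 : ℝ))
      (g' r * (-1 / 2) * g r ^ (-1 / 2 - 1 : ℝ)) r := fun r hr ↦
    (hderiv r hr).rpow_const (Or.inl (hpos r hr).ne')
  refine (convex_Icc a b).image_sub_le_mul_sub_of_deriv_le
    (fun r hr ↦ (hD r hr).continuousAt.continuousWithinAt) (fun r hr ↦ ?_) (fun r hr ↦ ?_)
    a (left_mem_Icc.2 hab) b (right_mem_Icc.2 hab) hab
  · exact (hD r (interior_subset hr)).differentiableAt.differentiableWithinAt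
  · rw [(hD r (interior_subset hr)).deriv]
    exact deriv_rpow_neg_half_le (hpos r (interior_subset hr)) (hineq r (interior_subset hr))

lemma div_sq_div_sq_le_of_mul_rpow_neg_half_le {y k C r : ℝ} (hy : 0 < y) (hk : 0 < k)
    (h : k * y ^ (-1 / 2 : ℝ) ≤ C * r) : (k / C) ^ 2 / r ^ 2 ≤ y := by
  have hsqrt : y ^ (-1 / 2 : ℝ) = (√y)⁻¹ := by
    rw [neg_div, rpow_neg hy.le, sqrt_eq_rpow, one_div]
  rw [hsqrt, ← div_eq_mul_inv, div_le_iff₀ (sqrt_pos.2 hy)] at h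
  have hCr : 0 < C * r := pos_of_mul_pos_left (hk.trans_le h) (sqrt_nonneg y)
  have hk2 : k ^ 2 ≤ (C * r) ^ 2 * y := by
    calc k ^ 2 ≤ (C * r * √y) ^ 2 := pow_le_pow_left₀ hk.le h 2
      _ = (C * r) ^ 2 * y := by rw [mul_pow, sq_sqrt hy.le]
  rw [div_pow, div_div, ← mul_pow, div_le_iff₀ (by positivity)]
  linarith

theorem stmt15_general (r₀ C : ℝ) (hr₀ : 0 < r₀) (g g' : ℝ → ℝ)
    (hpos : ∀ r ∈ Set.Icc (0:ℝ) r₀, 0 < g r)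
    (hderiv : ∀ r ∈ Set.Icc (0:ℝ) r₀, HasDerivAt g (g' r) r)
    (hineq : ∀ r ∈ Set.Icc (0:ℝ) r₀, -(C * (g r) ^ ((3:ℝ) / 2)) ≤ g' r)
    (hhalf : g r₀ = g 0 / 2) :
    ((2 - Real.sqrt 2) / C) ^ 2 / r₀ ^ 2 ≤ g r₀ := by
  have hgr₀ : 0 < g r₀ := hpos r₀ (right_mem_Icc.2 hr₀.le)
  have hgrowth := rpow_neg_half_sub_le_of_neg_mul_rpow_le_deriv hr₀.le hpos hderiv hineq
  have hg0 : g 0 ^ (-1 / 2 : ℝ) = g r₀ ^ (-1 / 2 : ℝ) * (√2 / 2) := by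
    rw [show g 0 = 2 * g r₀ by linarith, mul_rpow zero_le_two hgr₀.le, mul_comm,
      neg_div, rpow_neg zero_le_two, ← one_div, ← sqrt_eq_rpow]
    field_simp
    norm_num
  have hsqrt2 : √2 * √2 = 2 := mul_self_sqrt zero_le_two
  refine div_sq_div_sq_le_of_mul_rpow_neg_half_le hgr₀ ?_ ?_
  · nlinarith [sqrt_nonneg 2]
  · rw [hg0] at hgrowth
    linarith

theorem stmt15 (r₀ C : ℝ) (hr₀ : 0 < r₀) (hC : 0 < C) (g g' : ℝ → ℝ)
    (hpos : ∀ r ∈ Set.Icc (0:ℝ) r₀, 0 < g r)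
    (hderiv : ∀ r ∈ Set.Icc (0:ℝ) r₀, HasDerivAt g (g' r) r)
    (hineq : ∀ r ∈ Set.Icc (0:ℝ) r₀, -(C * (g r) ^ ((3:ℝ) / 2)) ≤ g' r)
    (hhalf : g r₀ = g 0 / 2) :
    ((2 - Real.sqrt 2) / C) ^ 2 / r₀ ^ 2 ≤ g r₀ :=
  stmt15_general r₀ C hr₀ g g' hpos hderiv hineq hhalf
end
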